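/- Let {X_t}_{t≥1} be a stationary binary Markov chain with parameters (a, b), 0 < a, b < 1, stationary distribution π = (π₀, π₁) = (b/(a+b), a/(a+b)), transition matrix P, ℓ = log₂(a/b), 0 < D < min(π₀, π₁), μ_D = h₂(π₁) − h₂(D), and J_n(D) = Σ_{t=1}^n ȷ(X_t, D) with ȷ(x,D) = −log₂ π_x − h₂(D). For each real θ, with u_θ = 2^{−θℓ}, the normalized cumulant generating function Λ_n(θ) := (1/n)·log₂ E[2^{θ(J_n(D) − n·μ_D)}] converges as n → ∞ to Λ(θ) = θ·π₁·ℓ + log₂ λ₊(u_θ), where λ₊(u) = ((1−a) + (1−b)u + √(((1−a) − (1−b)u)² + 4abu))/2 is the Perron root of the tilted transfer matrix P·diag(1,u). -/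

import Mathlib

open MeasureTheory

/-- Stationary distribution of the binary Markov chain with parameters `(a, b)`:
`π₀ = b/(a+b)`, `π₁ = a/(a+b)` (state `1` encoded as `true`). -/
noncomputable def statDist (a b : ℝ) (x : Bool) : ℝ :=
  if x then a / (a + b) else b / (a + b)

/-- Transition probabilities of the binary Markov chain:
`P₀₀ = 1-a`, `P₀₁ = a`, `P₁₀ = b`, `P₁₁ = 1-b`. -/
def transProb (a b : ℝ) (x y : Bool) : ℝ :=
  if x then (if y then 1 - b else b) else (if y then a else 1 - a)

/-- `X` is a stationary binary Markov chain with parameters `(a, b)` under `μ`: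
every finite path `(x_0, …, x_n)` has probability
`π_{x_0} ∏_{t=0}^{n-1} P_{x_t x_{t+1}}`. -/
def IsStatBinMarkov {Ω : Type*} [MeasurableSpace Ω] (μ : Measure Ω)
    (X : ℕ → Ω → Bool) (a b : ℝ) : Prop :=
  ∀ (n : ℕ) (x : Fin (n + 1) → Bool),
    μ {ω | ∀ t : Fin (n + 1), X t ω = x t}
      = ENNReal.ofReal
          (statDist a b (x 0) * ∏ t : Fin n, transProb a b (x t.castSucc) (x t.succ))


/-- The binary entropy function in bits. -/
noncomputable def binEntropy2 (p : ℝ) : ℝ :=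
  -p * Real.logb 2 p - (1 - p) * Real.logb 2 (1 - p)

/-- The single-letter d-tilted information of the binary Hamming problem:
`ȷ(x, D) = -log₂ π_x - h₂(D)`. -/
noncomputable def jTilt (a b D : ℝ) (x : Bool) : ℝ :=
  -Real.logb 2 (statDist a b x) - binEntropy2 D

def cnt (z : Bool) : ℕ := if z then 1 else 0

noncomputable def Hrec (a b u : ℝ) : ℕ → Bool → ℝ
  | 0, _ => 1
  | n+1, z => ∑ z' : Bool, transProb a b z z' * u ^ cnt z' * Hrec a b u n z'

lemma path_sum (a b u : ℝ) : ∀ (n : ℕ) (f : Bool → ℝ),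
    ∑ x : Fin (n+1) → Bool, f (x 0)
        * (∏ t : Fin n, transProb a b (x t.castSucc) (x t.succ))
        * u ^ (∑ t : Fin n, cnt (x t.succ))
      = ∑ z : Bool, f z * Hrec a b u n z := by
  intro n
  induction n with
  | zero =>
      intro f
      rw [← (Fin.consEquiv (fun _ : Fin 1 => Bool)).sum_comp]
      simp [Hrec, Fintype.sum_prod_type]
  | succ n ih =>
      intro f
      rw [← (Fin.consEquiv (fun _ : Fin (n+2) => Bool)).sum_comp]
      rw [Fintype.sum_prod_type]
      have key : ∀ (z₀ : Bool) (y : Fin (n+1) → Bool),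
          f ((Fin.cons z₀ y : Fin (n+2) → Bool) 0)
            * (∏ t : Fin (n+1), transProb a b ((Fin.cons z₀ y : Fin (n+2) → Bool) t.castSucc) ((Fin.cons z₀ y : Fin (n+2) → Bool) t.succ))
            * u ^ (∑ t : Fin (n+1), cnt ((Fin.cons z₀ y : Fin (n+2) → Bool) t.succ))
          = f z₀ * transProb a b z₀ (y 0) * u ^ cnt (y 0)
            * ((∏ t : Fin n, transProb a b (y t.castSucc) (y t.succ))
              * u ^ (∑ t : Fin n, cnt (y t.succ))) := by
        intro z₀ y
        rw [Fin.prod_univ_succ, Fin.sum_univ_succ]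
        have h1 : ∀ t : Fin n, (Fin.cons z₀ y : Fin (n+2) → Bool) t.succ.castSucc = y t.castSucc := by
          intro t; rw [← Fin.succ_castSucc, Fin.cons_succ]
        have h2 : ∀ t : Fin n, (Fin.cons z₀ y : Fin (n+2) → Bool) t.succ.succ = y t.succ := by
          intro t; rw [Fin.cons_succ]
        simp only [Fin.cons_zero, Fin.cons_succ, Fin.castSucc_zero, h1, h2, pow_add]
        ring
      calc ∑ z₀ : Bool, ∑ y : Fin (n+1) → Bool,
              f ((Fin.cons z₀ y : Fin (n+2) → Bool) 0)
                * (∏ t : Fin (n+1), transProb a b ((Fin.cons z₀ y : Fin (n+2) → Bool) t.castSucc) ((Fin.cons z₀ y : Fin (n+2) → Bool) t.succ))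
                * u ^ (∑ t : Fin (n+1), cnt ((Fin.cons z₀ y : Fin (n+2) → Bool) t.succ))
          = ∑ y : Fin (n+1) → Bool,
              ((∑ z₀ : Bool, f z₀ * transProb a b z₀ (y 0)) * u ^ cnt (y 0))
                * (∏ t : Fin n, transProb a b (y t.castSucc) (y t.succ))
                * u ^ (∑ t : Fin n, cnt (y t.succ)) := by
            rw [Finset.sum_comm]
            refine Finset.sum_congr rfl fun y _ => ?_
            simp only [key, Finset.sum_mul]
            exact Finset.sum_congr rfl fun z _ => by ring
        _ = ∑ z' : Bool, ((∑ z₀ : Bool, f z₀ * transProb a b z₀ z') * u ^ cnt z') * Hrec a b u n z' :=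
            ih (fun z' => (∑ z₀ : Bool, f z₀ * transProb a b z₀ z') * u ^ cnt z')
        _ = ∑ z : Bool, f z * Hrec a b u (n+1) z := by
            simp only [Hrec, Finset.mul_sum, Finset.sum_mul]
            rw [Finset.sum_comm]
            refine Finset.sum_congr rfl fun z _ => Finset.sum_congr rfl fun z' _ => by ring

noncomputable def Spath (a b u : ℝ) (n : ℕ) : ℝ :=
  ∑ x : Fin (n+1) → Bool,
    (statDist a b (x 0) * ∏ t : Fin n, transProb a b (x t.castSucc) (x t.succ))
      * u ^ (∑ t : Fin (n+1), cnt (x t))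

lemma Spath_eq (a b u : ℝ) (n : ℕ) :
    Spath a b u n = ∑ z : Bool, statDist a b z * u ^ cnt z * Hrec a b u n z := by
  rw [← path_sum a b u n (fun z => statDist a b z * u ^ cnt z)]
  refine Finset.sum_congr rfl fun x _ => ?_
  rw [Fin.sum_univ_succ, pow_add]
  ring

noncomputable def lamP (a b u : ℝ) : ℝ :=
  ((1 - a) + (1 - b) * u + Real.sqrt (((1 - a) - (1 - b) * u) ^ 2 + 4 * a * b * u)) / 2

section Perron
variable {a b u : ℝ} (ha0 : 0 < a) (ha1 : a < 1) (hb0 : 0 < b) (hb1 : b < 1) (hu : 0 < u)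

include ha0 ha1 hb0 hb1 hu

lemma sqrt_gt : |(1 - a) - (1 - b) * u| < Real.sqrt (((1 - a) - (1 - b) * u) ^ 2 + 4 * a * b * u) := by
  have h1 : ((1 - a) - (1 - b) * u) ^ 2 < ((1 - a) - (1 - b) * u) ^ 2 + 4 * a * b * u := by nlinarith [mul_pos (mul_pos ha0 hb0) hu]
  calc |(1 - a) - (1 - b) * u| = Real.sqrt (((1 - a) - (1 - b) * u) ^ 2) := (Real.sqrt_sq_eq_abs _).symm
    _ < _ := Real.sqrt_lt_sqrt (sq_nonneg _) h1

lemma lamP_pos : 0 < lamP a b u := by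
  have h := sqrt_gt ha0 ha1 hb0 hb1 hu
  have h2 := abs_nonneg ((1 - a) - (1 - b) * u)
  have h3 := neg_abs_le ((1 - a) - (1 - b) * u)
  unfold lamP; nlinarith

lemma lamP_quad : lamP a b u ^ 2
    = ((1 - a) + (1 - b) * u) * lamP a b u - u * ((1 - a) * (1 - b) - a * b) := by
  have hs : Real.sqrt (((1 - a) - (1 - b) * u) ^ 2 + 4 * a * b * u)
      ^ 2 = ((1 - a) - (1 - b) * u) ^ 2 + 4 * a * b * u :=
    Real.sq_sqrt (by nlinarith [mul_pos (mul_pos ha0 hb0) hu, sq_nonneg ((1-a)-(1-b)*u)])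
  unfold lamP
  field_simp
  rw [show a * b * u * 4 = 4 * a * b * u by ring]
  nlinarith [hs]

lemma v1_pos : 0 < lamP a b u - (1 - a) := by
  have h := sqrt_gt ha0 ha1 hb0 hb1 hu
  have h3 := le_abs_self ((1 - a) - (1 - b) * u)
  unfold lamP; nlinarith

end Perron

noncomputable def pvec (a b u : ℝ) (z : Bool) : ℝ :=
  if z then lamP a b u - (1 - a) else a * u

section Perron2
variable {a b u : ℝ} (ha0 : 0 < a) (ha1 : a < 1) (hb0 : 0 < b) (hb1 : b < 1) (hu : 0 < u)
include ha0 ha1 hb0 hb1 hu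

lemma pvec_pos : ∀ z, 0 < pvec a b u z := by
  intro z; cases z
  · exact mul_pos ha0 hu
  · exact v1_pos ha0 ha1 hb0 hb1 hu

lemma eigen : ∀ z : Bool, (∑ z' : Bool, transProb a b z z' * u ^ cnt z' * pvec a b u z')
    = lamP a b u * pvec a b u z := by
  have hq := lamP_quad ha0 ha1 hb0 hb1 hu
  intro z; cases z <;>
    simp [Fintype.sum_bool, transProb, pvec, cnt] <;>
    nlinarith [hq]

lemma Hrec_bounds : ∀ (n : ℕ) (z : Bool),
    lamP a b u ^ n * (pvec a b u z / max (pvec a b u false) (pvec a b u true)) ≤ Hrec a b u n z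
    ∧ Hrec a b u n z ≤ lamP a b u ^ n * (pvec a b u z / min (pvec a b u false) (pvec a b u true)) := by
  have hv := pvec_pos ha0 ha1 hb0 hb1 hu
  have hlam := lamP_pos ha0 ha1 hb0 hb1 hu
  have heig := eigen ha0 ha1 hb0 hb1 hu
  have hmaxpos : 0 < max (pvec a b u false) (pvec a b u true) := lt_max_of_lt_left (hv false)
  have hminpos : 0 < min (pvec a b u false) (pvec a b u true) := lt_min (hv false) (hv true)
  have hm : ∀ z z' : Bool, 0 ≤ transProb a b z z' * u ^ cnt z' := by
    intro z z'
    have : 0 ≤ transProb a b z z' := by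
      cases z <;> cases z' <;> simp [transProb] <;> linarith
    positivity
  intro n
  induction n with
  | zero =>
      intro z
      constructor
      · simp only [pow_zero, one_mul, Hrec]
        refine div_le_one_of_le₀ ?_ hmaxpos.le
        cases z
        · exact le_max_left _ _
        · exact le_max_right _ _
      · simp only [pow_zero, one_mul, Hrec]
        rw [le_div_iff₀ hminpos, one_mul]
        cases z
        · exact min_le_left _ _
        · exact min_le_right _ _
  | succ n ih =>
      intro z
      have hstep : ∀ c : ℝ,
          (∑ z' : Bool, transProb a b z z' * u ^ cnt z'
            * (lamP a b u ^ n * (pvec a b u z' / c)))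
          = lamP a b u ^ (n+1) * (pvec a b u z / c) := by
        intro c
        rw [show (∑ z' : Bool, transProb a b z z' * u ^ cnt z'
              * (lamP a b u ^ n * (pvec a b u z' / c)))
            = (lamP a b u ^ n / c) * ∑ z' : Bool, transProb a b z z' * u ^ cnt z' * pvec a b u z'
          from by rw [Finset.mul_sum]; exact Finset.sum_congr rfl fun z' _ => by ring]
        rw [heig z]
        ring
      constructor
      · calc lamP a b u ^ (n+1) * (pvec a b u z / max (pvec a b u false) (pvec a b u true))
            = ∑ z' : Bool, transProb a b z z' * u ^ cnt z'
                * (lamP a b u ^ n * (pvec a b u z' / max (pvec a b u false) (pvec a b u true))) :=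
              (hstep _).symm
          _ ≤ ∑ z' : Bool, transProb a b z z' * u ^ cnt z' * Hrec a b u n z' :=
              Finset.sum_le_sum fun z' _ =>
                mul_le_mul_of_nonneg_left (ih z').1 (hm z z')
          _ = Hrec a b u (n+1) z := rfl
      · calc Hrec a b u (n+1) z
            = ∑ z' : Bool, transProb a b z z' * u ^ cnt z' * Hrec a b u n z' := rfl
          _ ≤ ∑ z' : Bool, transProb a b z z' * u ^ cnt z'
                * (lamP a b u ^ n * (pvec a b u z' / min (pvec a b u false) (pvec a b u true))) :=
              Finset.sum_le_sum fun z' _ =>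
                mul_le_mul_of_nonneg_left (ih z').2 (hm z z')
          _ = lamP a b u ^ (n+1) * (pvec a b u z / min (pvec a b u false) (pvec a b u true)) :=
              hstep _

end Perron2

lemma jTilt_sub {a b : ℝ} (D : ℝ) (ha0 : 0 < a) (hb0 : 0 < b) (x : Bool) :
    jTilt a b D x - (binEntropy2 (a / (a + b)) - binEntropy2 D)
      = (a / (a + b)) * Real.logb 2 (a / b) - (cnt x : ℝ) * Real.logb 2 (a / b) := by
  have hab : 0 < a + b := by linarith
  have h1 : (0:ℝ) < a / (a + b) := by positivity
  have h0 : (0:ℝ) < b / (a + b) := by positivity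
  have hsub : 1 - a / (a + b) = b / (a + b) := by field_simp; ring
  have hsum : a / (a + b) + b / (a + b) = 1 := by field_simp
  have hℓ : Real.logb 2 (a / b)
      = Real.logb 2 (a / (a + b)) - Real.logb 2 (b / (a + b)) := by
    rw [← Real.logb_div (ne_of_gt h1) (ne_of_gt h0)]
    congr 1
    field_simp
  cases x <;>
    simp only [jTilt, binEntropy2, statDist, cnt, if_true, if_false, Bool.false_eq_true,
      hsub, hℓ, Nat.cast_one, Nat.cast_zero] <;>
    linear_combination Real.logb 2 (b / (a + b)) * hsum

lemma statDist_nonneg {a b : ℝ} (ha0 : 0 < a) (hb0 : 0 < b) (z : Bool) :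
    0 ≤ statDist a b z := by
  have hab : 0 < a + b := by linarith
  cases z <;> simp [statDist] <;> positivity

lemma transProb_nonneg {a b : ℝ} (ha0 : 0 < a) (ha1 : a < 1) (hb0 : 0 < b) (hb1 : b < 1)
    (z z' : Bool) : 0 ≤ transProb a b z z' := by
  cases z <;> cases z' <;> simp [transProb] <;> linarith

lemma integral_u_pow {Ω : Type*} [MeasurableSpace Ω] (μ : Measure Ω) [IsProbabilityMeasure μ]
    {a b : ℝ} (u : ℝ) (ha0 : 0 < a) (ha1 : a < 1) (hb0 : 0 < b) (hb1 : b < 1)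
    (X : ℕ → Ω → Bool) (hX : ∀ t, Measurable (X t)) (hM : IsStatBinMarkov μ X a b) (m : ℕ) :
    ∫ ω, u ^ (∑ t : Fin (m+1), cnt (X t ω)) ∂μ = Spath a b u m := by
  set Y : Ω → (Fin (m+1) → Bool) := fun ω t => X t ω with hYdef
  have hYm : Measurable Y := measurable_pi_lambda _ fun t => hX t
  have hProb : IsProbabilityMeasure (μ.map Y) := Measure.isProbabilityMeasure_map hYm.aemeasurable
  have h2 : ∫ ω, u ^ (∑ t : Fin (m+1), cnt (X t ω)) ∂μ
      = ∫ x, (fun x : Fin (m+1) → Bool => u ^ (∑ t, cnt (x t))) x ∂(μ.map Y) :=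
    (integral_map hYm.aemeasurable
      ((measurable_of_finite (fun x : Fin (m+1) → Bool => u ^ (∑ t, cnt (x t)))).aestronglyMeasurable)).symm
  rw [h2, integral_fintype (Integrable.of_finite)]
  have hmap : ∀ x : Fin (m+1) → Bool,
      (μ.map Y) {x} = ENNReal.ofReal
        (statDist a b (x 0) * ∏ t : Fin m, transProb a b (x t.castSucc) (x t.succ)) := by
    intro x
    rw [Measure.map_apply hYm (measurableSet_singleton x)]
    have : Y ⁻¹' {x} = {ω | ∀ t : Fin (m+1), X t ω = x t} := by
      ext ω
      simp only [Set.mem_preimage, Set.mem_singleton_iff, Set.mem_setOf_eq, funext_iff]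
      exact Iff.rfl
    rw [this]
    exact hM m x
  unfold Spath
  refine Finset.sum_congr rfl fun x _ => ?_
  rw [measureReal_def, hmap x, ENNReal.toReal_ofReal
    (mul_nonneg (statDist_nonneg ha0 hb0 _)
      (Finset.prod_nonneg fun t _ => transProb_nonneg ha0 ha1 hb0 hb1 _ _)),
    smul_eq_mul]

section SB
variable {a b u : ℝ} (ha0 : 0 < a) (ha1 : a < 1) (hb0 : 0 < b) (hb1 : b < 1) (hu : 0 < u)
include ha0 ha1 hb0 hb1 hu

lemma spos : ∀ z : Bool, 0 < statDist a b z * u ^ cnt z := by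
  have hab : 0 < a + b := by linarith
  intro z; cases z <;> simp [statDist, cnt] <;> positivity

lemma Spath_bounds (n : ℕ) :
    lamP a b u ^ n * ((∑ z : Bool, statDist a b z * u ^ cnt z * pvec a b u z)
        / max (pvec a b u false) (pvec a b u true)) ≤ Spath a b u n
    ∧ Spath a b u n ≤ lamP a b u ^ n * ((∑ z : Bool, statDist a b z * u ^ cnt z * pvec a b u z)
        / min (pvec a b u false) (pvec a b u true)) := by
  have hsp := spos ha0 ha1 hb0 hb1 hu
  have hH := Hrec_bounds ha0 ha1 hb0 hb1 hu
  have halg : ∀ c : ℝ, (∑ z : Bool, statDist a b z * u ^ cnt z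
        * (lamP a b u ^ n * (pvec a b u z / c)))
      = lamP a b u ^ n * ((∑ z : Bool, statDist a b z * u ^ cnt z * pvec a b u z) / c) := by
    intro c
    rw [Fintype.sum_bool, Fintype.sum_bool]
    ring
  rw [Spath_eq]
  constructor
  · rw [← halg]
    exact Finset.sum_le_sum fun z _ => mul_le_mul_of_nonneg_left (hH n z).1 (hsp z).le
  · rw [← halg]
    exact Finset.sum_le_sum fun z _ => mul_le_mul_of_nonneg_left (hH n z).2 (hsp z).le

end SB

lemma integral_formula {Ω : Type*} [MeasurableSpace Ω] (μ : Measure Ω) [IsProbabilityMeasure μ]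
    {a b : ℝ} (D : ℝ) (ha0 : 0 < a) (ha1 : a < 1) (hb0 : 0 < b) (hb1 : b < 1)
    (X : ℕ → Ω → Bool) (hX : ∀ t, Measurable (X t)) (hM : IsStatBinMarkov μ X a b)
    (θ u : ℝ) (hu : u = (2 : ℝ) ^ (-(θ * Real.logb 2 (a / b)))) (m : ℕ) :
    ∫ ω, (2 : ℝ) ^ (θ * ((∑ t ∈ Finset.range (m + 1), jTilt a b D (X t ω))
        - (m + 1 : ℕ) * (binEntropy2 (a / (a + b)) - binEntropy2 D))) ∂μ
      = (2 : ℝ) ^ (((m + 1 : ℕ) : ℝ) * (θ * (a / (a + b)) * Real.logb 2 (a / b)))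
        * Spath a b u m := by
  have hpt : ∀ ω : Ω,
      (2 : ℝ) ^ (θ * ((∑ t ∈ Finset.range (m + 1), jTilt a b D (X t ω))
        - (m + 1 : ℕ) * (binEntropy2 (a / (a + b)) - binEntropy2 D)))
      = (2 : ℝ) ^ (((m + 1 : ℕ) : ℝ) * (θ * (a / (a + b)) * Real.logb 2 (a / b)))
        * u ^ (∑ t : Fin (m + 1), cnt (X t ω)) := by
    intro ω
    have hN : ((∑ t : Fin (m + 1), cnt (X t ω) : ℕ) : ℝ)
        = ∑ t ∈ Finset.range (m + 1), (cnt (X t ω) : ℝ) := by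
      rw [Nat.cast_sum]
      exact Fin.sum_univ_eq_sum_range (fun i => (cnt (X i ω) : ℝ)) (m+1)
    have hexp : θ * ((∑ t ∈ Finset.range (m + 1), jTilt a b D (X t ω))
          - (m + 1 : ℕ) * (binEntropy2 (a / (a + b)) - binEntropy2 D))
        = ((m + 1 : ℕ) : ℝ) * (θ * (a / (a + b)) * Real.logb 2 (a / b))
          + (-(θ * Real.logb 2 (a / b)))
            * ((∑ t : Fin (m + 1), cnt (X t ω) : ℕ) : ℝ) := by
      rw [show (∑ t ∈ Finset.range (m + 1), jTilt a b D (X t ω))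
            = ∑ t ∈ Finset.range (m + 1),
              ((a / (a + b)) * Real.logb 2 (a / b)
                - (cnt (X t ω) : ℝ) * Real.logb 2 (a / b)
                + (binEntropy2 (a / (a + b)) - binEntropy2 D)) from
        Finset.sum_congr rfl fun t _ => by
          have := jTilt_sub D ha0 hb0 (X t ω); linarith]
      rw [Finset.sum_add_distrib, Finset.sum_sub_distrib, Finset.sum_const, Finset.sum_const,
        Finset.card_range, ← Finset.sum_mul, ← hN]
      push_cast
      ring
    have hupow : (2:ℝ) ^ ((-(θ * Real.logb 2 (a / b)))
          * ((∑ t : Fin (m + 1), cnt (X t ω) : ℕ) : ℝ))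
        = u ^ (∑ t : Fin (m + 1), cnt (X t ω)) := by
      rw [Real.rpow_mul (by norm_num : (0:ℝ) ≤ 2), Real.rpow_natCast, ← hu]
    rw [hexp, Real.rpow_add two_pos, hupow]
  calc ∫ ω, (2 : ℝ) ^ (θ * ((∑ t ∈ Finset.range (m + 1), jTilt a b D (X t ω))
        - (m + 1 : ℕ) * (binEntropy2 (a / (a + b)) - binEntropy2 D))) ∂μ
      = ∫ ω, (2 : ℝ) ^ (((m + 1 : ℕ) : ℝ) * (θ * (a / (a + b)) * Real.logb 2 (a / b)))
          * u ^ (∑ t : Fin (m + 1), cnt (X t ω)) ∂μ := by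
        exact integral_congr_ae (Filter.Eventually.of_forall hpt)
    _ = (2 : ℝ) ^ (((m + 1 : ℕ) : ℝ) * (θ * (a / (a + b)) * Real.logb 2 (a / b)))
          * ∫ ω, u ^ (∑ t : Fin (m + 1), cnt (X t ω)) ∂μ := by rw [integral_const_mul]
    _ = _ := by rw [integral_u_pow μ u ha0 ha1 hb0 hb1 X hX hM m]

open Filter in
/-- the normalized cumulant generating function
`Λ_n(θ) = (1/n) log₂ E[2^{θ(J_n(D) - n μ_D)}]` converges as `n → ∞` to
`Λ(θ) = θ π₁ ℓ + log₂ λ₊(u_θ)`, where `u_θ = 2^{-θℓ}` and `λ₊(u)` is the Perron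
root of the tilted transfer matrix. -/
theorem stmt_17 {Ω : Type*} [MeasurableSpace Ω] (μ : Measure Ω) [IsProbabilityMeasure μ]
    (a b D : ℝ) (ha0 : 0 < a) (ha1 : a < 1) (hb0 : 0 < b) (hb1 : b < 1)
    (hD0 : 0 < D) (hD : D < min (b / (a + b)) (a / (a + b)))
    (X : ℕ → Ω → Bool) (hX : ∀ t, Measurable (X t))
    (hM : IsStatBinMarkov μ X a b)
    (θ : ℝ) (uθ : ℝ) (huθ : uθ = (2 : ℝ) ^ (-(θ * Real.logb 2 (a / b)))) :
    Tendsto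
      (fun n : ℕ =>
        (1 / (n : ℝ))
          * Real.logb 2
            (∫ ω, (2 : ℝ) ^ (θ * ((∑ t ∈ Finset.range n, jTilt a b D (X t ω))
                - n * (binEntropy2 (a / (a + b)) - binEntropy2 D))) ∂μ))
      atTop
      (nhds (θ * (a / (a + b)) * Real.logb 2 (a / b)
        + Real.logb 2
            (((1 - a) + (1 - b) * uθ
              + Real.sqrt (((1 - a) - (1 - b) * uθ) ^ 2 + 4 * a * b * uθ)) / 2))) := by
  have hu : 0 < uθ := by rw [huθ]; exact Real.rpow_pos_of_pos two_pos _
  have hlam : 0 < lamP a b uθ := lamP_pos ha0 ha1 hb0 hb1 hu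
  have hgoal_lam : ((1 - a) + (1 - b) * uθ
      + Real.sqrt (((1 - a) - (1 - b) * uθ) ^ 2 + 4 * a * b * uθ)) / 2 = lamP a b uθ := rfl
  rw [hgoal_lam, ← tendsto_add_atTop_iff_nat 1]
  -- constants for bounds
  set W : ℝ := ∑ z : Bool, statDist a b z * uθ ^ cnt z * pvec a b uθ z with hWdef
  have hW : 0 < W := by
    rw [hWdef, Fintype.sum_bool]
    have h1 := mul_pos (spos ha0 ha1 hb0 hb1 hu true) (pvec_pos ha0 ha1 hb0 hb1 hu true)
    have h2 := mul_pos (spos ha0 ha1 hb0 hb1 hu false) (pvec_pos ha0 ha1 hb0 hb1 hu false)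
    linarith
  have hMx : 0 < max (pvec a b uθ false) (pvec a b uθ true) :=
    lt_max_of_lt_left (pvec_pos ha0 ha1 hb0 hb1 hu false)
  have hMn : 0 < min (pvec a b uθ false) (pvec a b uθ true) :=
    lt_min (pvec_pos ha0 ha1 hb0 hb1 hu false) (pvec_pos ha0 ha1 hb0 hb1 hu true)
  set K1 : ℝ := W / max (pvec a b uθ false) (pvec a b uθ true) with hK1def
  set K2 : ℝ := W / min (pvec a b uθ false) (pvec a b uθ true) with hK2def
  have hK1 : 0 < K1 := div_pos hW hMx
  have hK2 : 0 < K2 := div_pos hW hMn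
  have hSb : ∀ n : ℕ, lamP a b uθ ^ n * K1 ≤ Spath a b uθ n
      ∧ Spath a b uθ n ≤ lamP a b uθ ^ n * K2 := fun n => Spath_bounds ha0 ha1 hb0 hb1 hu n
  have hSpos : ∀ n : ℕ, 0 < Spath a b uθ n := fun n =>
    lt_of_lt_of_le (mul_pos (pow_pos hlam n) hK1) (hSb n).1
  -- rewrite the sequence
  have hfun : ∀ n : ℕ,
      (1 / ((n + 1 : ℕ) : ℝ)) * Real.logb 2
        (∫ ω, (2 : ℝ) ^ (θ * ((∑ t ∈ Finset.range (n + 1), jTilt a b D (X t ω))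
            - (n + 1 : ℕ) * (binEntropy2 (a / (a + b)) - binEntropy2 D))) ∂μ)
      = θ * (a / (a + b)) * Real.logb 2 (a / b)
        + (1 / ((n : ℝ) + 1)) * Real.logb 2 (Spath a b uθ n) := by
    intro n
    rw [integral_formula μ D ha0 ha1 hb0 hb1 X hX hM θ uθ huθ n]
    rw [Real.logb_mul (ne_of_gt (Real.rpow_pos_of_pos two_pos _)) (ne_of_gt (hSpos n))]
    rw [Real.logb_rpow (by norm_num : (0:ℝ) < 2) (by norm_num : (2:ℝ) ≠ 1)]
    have hne : ((n : ℝ) + 1) ≠ 0 := by positivity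
    push_cast
    field_simp
  refine Tendsto.congr (fun n => (hfun n).symm) ?_
  -- squeeze
  have key : ∀ C : ℝ, Tendsto (fun n : ℕ =>
      θ * (a / (a + b)) * Real.logb 2 (a / b)
        + (1 / ((n : ℝ) + 1)) * ((n : ℝ) * Real.logb 2 (lamP a b uθ) + C)) atTop
      (nhds (θ * (a / (a + b)) * Real.logb 2 (a / b) + Real.logb 2 (lamP a b uθ))) := by
    intro C
    have h0 : Tendsto (fun n : ℕ => (C - Real.logb 2 (lamP a b uθ)) * (1 / ((n : ℝ) + 1)))
        atTop (nhds 0) := by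
      simpa using tendsto_one_div_add_atTop_nhds_zero_nat.const_mul
        (C - Real.logb 2 (lamP a b uθ))
    have h1 := (tendsto_const_nhds
      (x := θ * (a / (a + b)) * Real.logb 2 (a / b) + Real.logb 2 (lamP a b uθ))
      (f := atTop (α := ℕ))).add h0
    rw [add_zero] at h1
    refine h1.congr fun n => ?_
    have hne : ((n : ℝ) + 1) ≠ 0 := by positivity
    field_simp
    ring
  have hloglo : ∀ n : ℕ, (n : ℝ) * Real.logb 2 (lamP a b uθ) + Real.logb 2 K1
      ≤ Real.logb 2 (Spath a b uθ n) := by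
    intro n
    have := Real.logb_le_logb_of_le (b := 2) one_lt_two
      (mul_pos (pow_pos hlam n) hK1) (hSb n).1
    rwa [Real.logb_mul (ne_of_gt (pow_pos hlam n)) (ne_of_gt hK1), Real.logb_pow] at this
  have hloghi : ∀ n : ℕ, Real.logb 2 (Spath a b uθ n)
      ≤ (n : ℝ) * Real.logb 2 (lamP a b uθ) + Real.logb 2 K2 := by
    intro n
    have := Real.logb_le_logb_of_le (b := 2) one_lt_two (hSpos n) (hSb n).2
    rwa [Real.logb_mul (ne_of_gt (pow_pos hlam n)) (ne_of_gt hK2), Real.logb_pow] at this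
  refine tendsto_of_tendsto_of_tendsto_of_le_of_le
    (key (Real.logb 2 K1)) (key (Real.logb 2 K2)) (fun n => ?_) (fun n => ?_)
  · have hpos : (0:ℝ) ≤ 1 / ((n : ℝ) + 1) := by positivity
    exact add_le_add_right (mul_le_mul_of_nonneg_left (hloglo n) hpos) _
  · have hpos : (0:ℝ) ≤ 1 / ((n : ℝ) + 1) := by positivity
    exact add_le_add_right (mul_le_mul_of_nonneg_left (hloghi n) hpos) _
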